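/- Let n ≥ 4 and M be a finite set. Suppose there exist functions msg : {0,1}^{n−2} → M and dec : M → {1,…,n−3} → {0,1} such that for every x ∈ {0,1}^{n−2} and every k ∈ {1,…,n−3}, dec(msg(x))(k) = 1 if and only if the graph G_{x,k} is a tree. Then |M| ≥ 2^{n−3}. Consequently, any streaming algorithm or RNN whose state after reading the edges {a, n−1+x_a} (a = 1,…,n−2) determines, for every k, whether G_{x,k} is a tree — even after arbitrary further computation such as chain-of-thought — must have at least 2^{n−3} states; solving IsTree on n-vertex graphs requires Ω(n) bits of memory. -/

import Mathlib

open SimpleGraph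

/-- The graph `G_{x,k}` on vertices `{1,…,n}` (0-indexed as `Fin n`):
each vertex `a ∈ {1,…,n−2}` is joined to hub `n−1` if `x_a = 0` and to hub `n`
if `x_a = 1`, and additionally vertices `k` and `k+1` are joined. -/
def Gxk (n : ℕ) (x : Fin (n - 2) → Bool) (k : Fin (n - 3)) : SimpleGraph (Fin n) :=
  SimpleGraph.fromRel (fun u v =>
    (∃ a : Fin (n - 2), u.val = a.val ∧ v.val = (n - 2) + (if x a then 1 else 0)) ∨
    (u.val = k.val ∧ v.val = k.val + 1))

def Xf (n : ℕ) (x : Fin (n - 2) → Bool) (i : ℕ) : Bool :=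
  if h : i < n - 2 then x ⟨i, h⟩ else false

def hubv (n : ℕ) (b : Bool) : ℕ := n - 2 + (if b then 1 else 0)

lemma Xf_eq (n : ℕ) (x : Fin (n - 2) → Bool) (a : Fin (n - 2)) : Xf n x a.val = x a := by
  simp [Xf]

lemma hubv_lt (n : ℕ) (hn : 4 ≤ n) (b : Bool) : hubv n b < n := by
  cases b <;> simp [hubv] <;> omega

lemma hubv_ge (n : ℕ) (b : Bool) : n - 2 ≤ hubv n b := by
  cases b <;> simp [hubv]

lemma hubv_inj (n : ℕ) {b c : Bool} (h : hubv n b = hubv n c) : b = c := by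
  cases b <;> cases c <;> simp [hubv] at h ⊢ <;> omega

lemma gxk_adj_iff (n : ℕ) (x : Fin (n - 2) → Bool) (k : Fin (n - 3)) (u v : Fin n) :
    (Gxk n x k).Adj u v ↔ u ≠ v ∧
      ((u.val < n - 2 ∧ v.val = hubv n (Xf n x u.val)) ∨
       (v.val < n - 2 ∧ u.val = hubv n (Xf n x v.val)) ∨
       (u.val = k.val ∧ v.val = k.val + 1) ∨
       (v.val = k.val ∧ u.val = k.val + 1)) := by
  have he : ∀ w z : Fin n,
      (∃ a : Fin (n - 2), w.val = a.val ∧ z.val = (n - 2) + (if x a then 1 else 0)) ↔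
      (w.val < n - 2 ∧ z.val = hubv n (Xf n x w.val)) := by
    intro w z
    constructor
    · rintro ⟨a, h1, h2⟩
      have hw : w.val < n - 2 := h1 ▸ a.isLt
      refine ⟨hw, ?_⟩
      have : Xf n x w.val = x a := by rw [h1, Xf_eq]
      rw [h2, hubv, this]
    · rintro ⟨h1, h2⟩
      refine ⟨⟨w.val, h1⟩, rfl, ?_⟩
      rw [h2, hubv, Xf, dif_pos h1]
  rw [Gxk, SimpleGraph.fromRel_adj]
  rw [he u v, he v u]
  tauto

lemma cross_mem {V : Type*} {G : SimpleGraph V} (P : V → Prop) (e : Sym2 V)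
    (hP : ∀ u v, G.Adj u v → s(u, v) ≠ e → (P u ↔ P v)) :
    ∀ {a b : V} (w : G.Walk a b), P a → ¬ P b → e ∈ w.edges := by
  intro a b w
  induction w with
  | nil => intro ha hb; exact absurd ha hb
  | @cons u v' w' hadj p ih =>
    intro ha hb
    by_cases hc : s(u, v') = e
    · simp [Walk.edges_cons, hc]
    · exact List.mem_cons_of_mem _ (ih ((hP _ _ hadj hc).mp ha) hb)

lemma bridge_of_coloring {V : Type*} {G : SimpleGraph V} {u v : V} (P : V → Prop)
    (hadj : G.Adj u v)
    (hP : ∀ a b, G.Adj a b → s(a, b) ≠ s(u, v) → (P a ↔ P b))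
    (hu : P u) (hv : ¬ P v) : G.IsBridge s(u, v) := by
  rw [isBridge_iff_adj_and_forall_walk_mem_edges]
  exact fun p => cross_mem P _ hP p hu hv

section Main

variable (n : ℕ) (x : Fin (n - 2) → Bool) (k : Fin (n - 3))

/-- The two-coloring used to show an edge is a bridge. -/
def Pb (t : ℕ) (b : Bool) (w : Fin n) : Prop :=
  w.val = t ∨ (w.val < n - 2 ∧ Xf n x w.val = b) ∨ w.val = hubv n b

lemma pres_star (hn : 4 ≤ n) (t : ℕ) (b : Bool)
    (H1 : t < n - 2) (H2 : Xf n x t ≠ b)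
    (H3 : k.val = t ∨ Xf n x k.val = b) (H4 : k.val + 1 = t ∨ Xf n x (k.val + 1) = b) :
    ∀ u v : Fin n, (Gxk n x k).Adj u v →
      s(u, v) ≠ s((⟨t, by omega⟩ : Fin n), (⟨hubv n (Xf n x t), hubv_lt n hn _⟩ : Fin n)) →
      (Pb n x t b u ↔ Pb n x t b v) := by
  set e : Sym2 (Fin n) :=
    s((⟨t, by omega⟩ : Fin n), (⟨hubv n (Xf n x t), hubv_lt n hn _⟩ : Fin n)) with he
  have star_case : ∀ w z : Fin n, w.val < n - 2 → z.val = hubv n (Xf n x w.val) →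
      s(w, z) ≠ e → (Pb n x t b w ↔ Pb n x t b z) := by
    intro w z hw hz hcz
    have hzge : n - 2 ≤ z.val := hz ▸ hubv_ge n _
    have hwt : w.val ≠ t := by
      intro ht
      apply hcz
      have hw' : w = (⟨t, by omega⟩ : Fin n) := Fin.ext ht
      have hz' : z = (⟨hubv n (Xf n x t), hubv_lt n hn _⟩ : Fin n) :=
        Fin.ext (by rw [hz, ht])
      rw [he, Sym2.eq_iff]
      exact Or.inl ⟨hw', hz'⟩
    have hbge : n - 2 ≤ hubv n b := hubv_ge n b
    constructor
    · rintro (ht | ⟨_, hxb⟩ | hhub)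
      · exact absurd ht hwt
      · exact Or.inr (Or.inr (by rw [hz, hxb]))
      · omega
    · rintro (ht | ⟨hzlt, _⟩ | hz2)
      · omega
      · omega
      · have : Xf n x w.val = b := hubv_inj n (hz ▸ hz2)
        exact Or.inr (Or.inl ⟨hw, this⟩)
  have spec_case : ∀ w z : Fin n, w.val = k.val → z.val = k.val + 1 →
      (Pb n x t b w ↔ Pb n x t b z) := by
    intro w z hw hz
    have hk3 : k.val < n - 3 := k.isLt
    have hPw : Pb n x t b w := by
      rcases H3 with h | h
      · exact Or.inl (by omega)
      · exact Or.inr (Or.inl ⟨by omega, by rw [hw]; exact h⟩)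
    have hPz : Pb n x t b z := by
      rcases H4 with h | h
      · exact Or.inl (by omega)
      · exact Or.inr (Or.inl ⟨by omega, by rw [hz]; exact h⟩)
    exact iff_of_true hPw hPz
  intro u v hadj hc
  rw [gxk_adj_iff] at hadj
  obtain ⟨-, hcase⟩ := hadj
  rcases hcase with ⟨h1, h2⟩ | ⟨h1, h2⟩ | ⟨h1, h2⟩ | ⟨h1, h2⟩
  · exact star_case u v h1 h2 hc
  · exact (star_case v u h1 h2 (by rwa [Sym2.eq_swap])).symm
  · exact spec_case u v h1 h2
  · exact (spec_case v u h1 h2).symm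

lemma pres_spec (hn : 4 ≤ n) (hne : Xf n x (k.val + 1) ≠ Xf n x k.val) :
    ∀ u v : Fin n, (Gxk n x k).Adj u v →
      s(u, v) ≠ s((⟨k.val, by have := k.isLt; omega⟩ : Fin n),
                  (⟨k.val + 1, by have := k.isLt; omega⟩ : Fin n)) →
      (Pb n x k.val (Xf n x k.val) u ↔ Pb n x k.val (Xf n x k.val) v) := by
  have hk3 : k.val < n - 3 := k.isLt
  set b := Xf n x k.val with hb
  set e : Sym2 (Fin n) :=
    s((⟨k.val, by omega⟩ : Fin n), (⟨k.val + 1, by omega⟩ : Fin n)) with he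
  have star_case : ∀ w z : Fin n, w.val < n - 2 → z.val = hubv n (Xf n x w.val) →
      (Pb n x k.val b w ↔ Pb n x k.val b z) := by
    intro w z hw hz
    have hzge : n - 2 ≤ z.val := hz ▸ hubv_ge n _
    have hbge : n - 2 ≤ hubv n b := hubv_ge n b
    constructor
    · rintro (ht | ⟨_, hxb⟩ | hhub)
      · exact Or.inr (Or.inr (by rw [hz, ht, hb]))
      · exact Or.inr (Or.inr (by rw [hz, hxb]))
      · omega
    · rintro (ht | ⟨hzlt, _⟩ | hz2)
      · omega
      · omega
      · have : Xf n x w.val = b := hubv_inj n (hz ▸ hz2)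
        exact Or.inr (Or.inl ⟨hw, this⟩)
  intro u v hadj hc
  rw [gxk_adj_iff] at hadj
  obtain ⟨-, hcase⟩ := hadj
  have spec_case : ∀ w z : Fin n, w.val = k.val → z.val = k.val + 1 →
      s(w, z) ≠ e → (Pb n x k.val b w ↔ Pb n x k.val b z) := by
    intro w z hw hz hcz
    exfalso
    apply hcz
    have hw' : w = (⟨k.val, by omega⟩ : Fin n) := Fin.ext hw
    have hz' : z = (⟨k.val + 1, by omega⟩ : Fin n) := Fin.ext hz
    rw [he, Sym2.eq_iff]
    exact Or.inl ⟨hw', hz'⟩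
  rcases hcase with ⟨h1, h2⟩ | ⟨h1, h2⟩ | ⟨h1, h2⟩ | ⟨h1, h2⟩
  · exact star_case u v h1 h2
  · exact (star_case v u h1 h2).symm
  · exact spec_case u v h1 h2 hc
  · exact (spec_case v u h1 h2 (by rwa [Sym2.eq_swap])).symm

end Main

section Main2

variable (n : ℕ) (x : Fin (n - 2) → Bool) (k : Fin (n - 3))

lemma gxk_adjA (hn : 4 ≤ n) (a : ℕ) (ha : a < n - 2) :
    (Gxk n x k).Adj ⟨a, by omega⟩ ⟨hubv n (Xf n x a), hubv_lt n hn _⟩ := by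
  rw [gxk_adj_iff]
  refine ⟨?_, Or.inl ⟨ha, rfl⟩⟩
  have := hubv_ge n (Xf n x a)
  intro hEq
  have := congrArg Fin.val hEq
  simp only at this
  omega

lemma gxk_adjK (hn : 4 ≤ n) :
    (Gxk n x k).Adj ⟨k.val, by have := k.isLt; omega⟩ ⟨k.val + 1, by have := k.isLt; omega⟩ := by
  rw [gxk_adj_iff]
  refine ⟨?_, Or.inr (Or.inr (Or.inl ⟨rfl, rfl⟩))⟩
  intro hEq
  have := congrArg Fin.val hEq
  simp only at this
  omega

lemma bridge_star (hn : 4 ≤ n) (hne : Xf n x (k.val + 1) ≠ Xf n x k.val)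
    (a : ℕ) (ha : a < n - 2) :
    (Gxk n x k).IsBridge
      s((⟨a, by omega⟩ : Fin n), (⟨hubv n (Xf n x a), hubv_lt n hn _⟩ : Fin n)) := by
  have hk3 : k.val < n - 3 := k.isLt
  have hbgeX : n - 2 ≤ hubv n (Xf n x a) := hubv_ge n _
  have hadj := gxk_adjA n x k hn a ha
  by_cases hk : a = k.val
  · have hXa : Xf n x a = Xf n x k.val := by rw [hk]
    have H4 : Xf n x (k.val + 1) = !Xf n x a := by
      rw [hXa]
      cases h1 : Xf n x (k.val + 1) <;> cases h2 : Xf n x k.val <;> simp_all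
    refine bridge_of_coloring (Pb n x a (!Xf n x a)) hadj ?_ (Or.inl rfl) ?_
    · exact pres_star n x k hn a _ ha (by cases h : Xf n x a <;> simp [h])
        (Or.inl hk.symm) (Or.inr H4)
    · rintro (h | ⟨h, -⟩ | h)
      · simp only at h; omega
      · simp only at h; omega
      · have hb2 : n - 2 ≤ hubv n (!Xf n x a) := hubv_ge n _
        have := hubv_inj n h
        cases hX : Xf n x a <;> rw [hX] at this <;> simp at this
  · by_cases hk1 : a = k.val + 1
    · have hXa : Xf n x a = Xf n x (k.val + 1) := by rw [hk1]
      have H3 : Xf n x k.val = !Xf n x a := by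
        rw [hXa]
        cases h1 : Xf n x (k.val + 1) <;> cases h2 : Xf n x k.val <;> simp_all
      refine bridge_of_coloring (Pb n x a (!Xf n x a)) hadj ?_ (Or.inl rfl) ?_
      · exact pres_star n x k hn a _ ha
          (by cases h : Xf n x a <;> simp [h]) (Or.inr H3) (Or.inl hk1.symm)
      · rintro (h | ⟨h, -⟩ | h)
        · simp only at h; omega
        · simp only at h; omega
        · have := hubv_inj n h
          cases hX : Xf n x a <;> rw [hX] at this <;> simp at this
    · refine bridge_of_coloring (fun w => w.val = a) hadj ?_ rfl (by simp only; omega)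
      intro u v hadj' hc
      rw [gxk_adj_iff] at hadj'
      obtain ⟨-, hcase⟩ := hadj'
      have star : ∀ w z : Fin n, w.val < n - 2 → z.val = hubv n (Xf n x w.val) →
          s(w, z) ≠ s((⟨a, by omega⟩ : Fin n),
            (⟨hubv n (Xf n x a), hubv_lt n hn _⟩ : Fin n)) →
          ((w.val = a) ↔ (z.val = a)) := by
        intro w z hw hz hcz
        have hzge : n - 2 ≤ z.val := hz ▸ hubv_ge n _
        constructor
        · intro hwa
          exfalso
          apply hcz
          rw [Sym2.eq_iff]
          exact Or.inl ⟨Fin.ext hwa, Fin.ext (by rw [hz, hwa])⟩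
        · intro hza; omega
      rcases hcase with ⟨h1, h2⟩ | ⟨h1, h2⟩ | ⟨h1, h2⟩ | ⟨h1, h2⟩
      · exact star u v h1 h2 hc
      · exact (star v u h1 h2 (by rwa [Sym2.eq_swap])).symm
      · constructor <;> (intro; omega)
      · constructor <;> (intro; omega)

lemma bridge_spec (hn : 4 ≤ n) (hne : Xf n x (k.val + 1) ≠ Xf n x k.val) :
    (Gxk n x k).IsBridge
      s((⟨k.val, by have := k.isLt; omega⟩ : Fin n),
        (⟨k.val + 1, by have := k.isLt; omega⟩ : Fin n)) := by
  have hk3 : k.val < n - 3 := k.isLt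
  refine bridge_of_coloring (Pb n x k.val (Xf n x k.val)) (gxk_adjK n x k hn)
    (pres_spec n x k hn hne) (Or.inl rfl) ?_
  rintro (h | ⟨-, h⟩ | h)
  · simp only at h; omega
  · exact hne h
  · have := hubv_ge n (Xf n x k.val)
    simp only at h; omega

lemma gxk_acyclic (hn : 4 ≤ n) (hne : Xf n x (k.val + 1) ≠ Xf n x k.val) :
    (Gxk n x k).IsAcyclic := by
  rw [isAcyclic_iff_forall_adj_isBridge]
  intro u v hadj
  have hadj' := hadj
  rw [gxk_adj_iff] at hadj'
  obtain ⟨-, hcase⟩ := hadj'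
  rcases hcase with ⟨h1, h2⟩ | ⟨h1, h2⟩ | ⟨h1, h2⟩ | ⟨h1, h2⟩
  · have hv' : v = (⟨hubv n (Xf n x u.val), hubv_lt n hn _⟩ : Fin n) := Fin.ext h2
    have hu' : u = (⟨u.val, by omega⟩ : Fin n) := Fin.ext rfl
    rw [hu', hv']
    exact bridge_star n x k hn hne u.val h1
  · have hu' : u = (⟨hubv n (Xf n x v.val), hubv_lt n hn _⟩ : Fin n) := Fin.ext h2
    have hv' : v = (⟨v.val, by omega⟩ : Fin n) := Fin.ext rfl
    rw [Sym2.eq_swap, hu', hv']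
    exact bridge_star n x k hn hne v.val h1
  · have hu' : u = (⟨k.val, by have := k.isLt; omega⟩ : Fin n) := Fin.ext h1
    have hv' : v = (⟨k.val + 1, by have := k.isLt; omega⟩ : Fin n) := Fin.ext h2
    convert bridge_spec n x k hn hne using 3
  · have hv' : v = (⟨k.val, by have := k.isLt; omega⟩ : Fin n) := Fin.ext h1
    have hu' : u = (⟨k.val + 1, by have := k.isLt; omega⟩ : Fin n) := Fin.ext h2
    rw [Sym2.eq_swap]
    convert bridge_spec n x k hn hne using 3

lemma gxk_connected (hn : 4 ≤ n) (hne : Xf n x (k.val + 1) ≠ Xf n x k.val) :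
    (Gxk n x k).Connected := by
  have hk3 : k.val < n - 3 := k.isLt
  have rhub : ∀ b : Bool,
      (Gxk n x k).Reachable ⟨hubv n false, hubv_lt n hn false⟩ ⟨hubv n b, hubv_lt n hn b⟩ := by
    intro b
    cases b
    · exact Reachable.refl _
    · cases hXk : Xf n x k.val
      · have hX1 : Xf n x (k.val + 1) = true := by
          cases h : Xf n x (k.val + 1) <;> simp_all
        have r1 : (Gxk n x k).Reachable ⟨hubv n false, hubv_lt n hn false⟩
            ⟨k.val, by omega⟩ := by
          have h := (gxk_adjA n x k hn k.val (by omega)).symm.reachable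
          rw [hXk] at h
          exact h
        refine r1.trans ((gxk_adjK n x k hn).reachable.trans ?_)
        have h := (gxk_adjA n x k hn (k.val + 1) (by omega)).reachable
        rw [hX1] at h
        exact h
      · have hX1 : Xf n x (k.val + 1) = false := by
          cases h : Xf n x (k.val + 1) <;> simp_all
        have r1 : (Gxk n x k).Reachable ⟨hubv n false, hubv_lt n hn false⟩
            ⟨k.val + 1, by omega⟩ := by
          have h := (gxk_adjA n x k hn (k.val + 1) (by omega)).symm.reachable
          rw [hX1] at h
          exact h
        refine r1.trans ((gxk_adjK n x k hn).symm.reachable.trans ?_)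
        have h := (gxk_adjA n x k hn k.val (by omega)).reachable
        rw [hXk] at h
        exact h
  have reach : ∀ v : Fin n, (Gxk n x k).Reachable ⟨hubv n false, hubv_lt n hn false⟩ v := by
    intro v
    by_cases hv : v.val < n - 2
    · have h1 := (rhub (Xf n x v.val)).trans (gxk_adjA n x k hn v.val hv).symm.reachable
      have hveq : (⟨v.val, by omega⟩ : Fin n) = v := Fin.ext rfl
      rwa [hveq] at h1
    · have hv2 : v.val < n := v.isLt
      by_cases hv3 : v.val = n - 2
      · have hveq : v = ⟨hubv n false, hubv_lt n hn false⟩ := by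
          apply Fin.ext
          simp [hubv]
          omega
        rw [hveq]
      · have hveq : v = ⟨hubv n true, hubv_lt n hn true⟩ := by
          apply Fin.ext
          simp [hubv]
          omega
        rw [hveq]
        exact rhub true
  rw [connected_iff]
  exact ⟨fun u v => (reach u).symm.trans (reach v), ⟨⟨0, by omega⟩⟩⟩

lemma gxk_not_acyclic (hn : 4 ≤ n) (heq : Xf n x (k.val + 1) = Xf n x k.val) :
    ¬ (Gxk n x k).IsAcyclic := by
  have hk3 : k.val < n - 3 := k.isLt
  have hbge : n - 2 ≤ hubv n (Xf n x k.val) := hubv_ge n _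
  have h01 : (Gxk n x k).Adj ⟨k.val, by omega⟩ ⟨k.val + 1, by omega⟩ := gxk_adjK n x k hn
  have h12 : (Gxk n x k).Adj ⟨k.val + 1, by omega⟩
      ⟨hubv n (Xf n x k.val), hubv_lt n hn _⟩ := by
    rw [gxk_adj_iff]
    refine ⟨?_, Or.inl ⟨by show k.val + 1 < n - 2; omega,
      by show hubv n (Xf n x k.val) = hubv n (Xf n x (k.val + 1)); rw [heq]⟩⟩
    intro hEq
    have := congrArg Fin.val hEq
    simp only at this
    omega
  have h20 : (Gxk n x k).Adj ⟨hubv n (Xf n x k.val), hubv_lt n hn _⟩ ⟨k.val, by omega⟩ := by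
    rw [gxk_adj_iff]
    exact ⟨by intro hEq; have := congrArg Fin.val hEq; simp only at this; omega,
      Or.inr (Or.inl ⟨by show k.val < n - 2; omega, rfl⟩)⟩
  intro hA
  apply hA (Walk.cons h01 (Walk.cons h12 (Walk.cons h20 Walk.nil)))
  rw [Walk.cons_isCycle_iff]
  constructor
  · rw [Walk.isPath_def]
    simp only [Walk.support_cons, Walk.support_nil]
    simp [List.nodup_cons, Fin.ext_iff]
    omega
  · simp only [Walk.edges_cons, Walk.edges_nil, List.mem_cons, List.mem_singleton]
    rintro (h | h | h)
    · rw [Sym2.eq_iff] at h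
      rcases h with ⟨h1, h2⟩ | ⟨h1, h2⟩ <;>
        (first
          | (have := congrArg Fin.val h1; have := congrArg Fin.val h2; simp only at *; omega)
          | (have := congrArg Fin.val h1; have := congrArg Fin.val h2; simp only at *; omega))
    · rw [Sym2.eq_iff] at h
      rcases h with ⟨h1, h2⟩ | ⟨h1, h2⟩ <;>
        (have := congrArg Fin.val h1; have := congrArg Fin.val h2; simp only at *; omega)
    · simp at h

theorem gxk_isTree_iff (hn : 4 ≤ n) (h1 : k.val < n - 2) (h2 : k.val + 1 < n - 2) :
    (Gxk n x k).IsTree ↔ x ⟨k.val + 1, h2⟩ ≠ x ⟨k.val, h1⟩ := by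
  have e1 : Xf n x (k.val + 1) = x ⟨k.val + 1, h2⟩ := Xf_eq n x ⟨k.val + 1, h2⟩
  have e0 : Xf n x k.val = x ⟨k.val, h1⟩ := Xf_eq n x ⟨k.val, h1⟩
  constructor
  · intro hT hEq
    obtain ⟨-, hA⟩ := hT
    exact gxk_not_acyclic n x k hn (by rw [e1, e0, hEq]) hA
  · intro hne
    have hne' : Xf n x (k.val + 1) ≠ Xf n x k.val := by rw [e1, e0]; exact hne
    exact ⟨gxk_connected n x k hn hne', gxk_acyclic n x k hn hne'⟩

end Main2

def encY (n : ℕ) (y : Fin (n - 3) → Bool) : Fin (n - 2) → Bool := fun a =>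
  decide (Odd ((Finset.univ.filter (fun i : Fin (n - 3) => i.val < a.val ∧ y i = true)).card))

lemma encY_succ (n : ℕ) (y : Fin (n - 3) → Bool) (k : Fin (n - 3))
    (h1 : k.val < n - 2) (h2 : k.val + 1 < n - 2) :
    (encY n y ⟨k.val + 1, h2⟩ ≠ encY n y ⟨k.val, h1⟩) ↔ y k = true := by
  classical
  set S0 := Finset.univ.filter (fun i : Fin (n - 3) => i.val < k.val ∧ y i = true) with hS0
  have hsplit : Finset.univ.filter (fun i : Fin (n - 3) => i.val < k.val + 1 ∧ y i = true)
      = if y k = true then insert k S0 else S0 := by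
    ext i
    by_cases hyk : y k = true
    · rw [if_pos hyk]
      simp only [Finset.mem_filter, Finset.mem_insert, Finset.mem_univ, true_and, hS0]
      constructor
      · rintro ⟨hlt, hy⟩
        by_cases hik : i = k
        · exact Or.inl hik
        · have : i.val ≠ k.val := fun hc => hik (Fin.ext hc)
          exact Or.inr ⟨by omega, hy⟩
      · rintro (rfl | ⟨hlt, hy⟩)
        · exact ⟨by omega, hyk⟩
        · exact ⟨by omega, hy⟩
    · rw [if_neg hyk]
      simp only [Finset.mem_filter, Finset.mem_univ, true_and, hS0]
      constructor
      · rintro ⟨hlt, hy⟩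
        have : i.val ≠ k.val := fun hc => hyk (by rwa [Fin.ext hc] at hy)
        exact ⟨by omega, hy⟩
      · rintro ⟨hlt, hy⟩
        exact ⟨by omega, hy⟩
  have hknot : k ∉ S0 := by simp [hS0]
  rw [show encY n y ⟨k.val + 1, h2⟩ = decide (Odd ((Finset.univ.filter
      (fun i : Fin (n - 3) => i.val < k.val + 1 ∧ y i = true)).card)) from rfl,
    show encY n y ⟨k.val, h1⟩ = decide (Odd S0.card) from rfl]
  simp only [ne_eq, decide_eq_decide]
  rw [hsplit]
  by_cases hyk : y k = true
  · rw [if_pos hyk, Finset.card_insert_of_notMem hknot]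
    simp only [hyk, Nat.odd_add_one]
    tauto
  · rw [if_neg hyk]
    simp only [hyk]
    tauto

/-- **IsTree one-way communication / memory lower bound.**
Any one-way protocol whose message (a function of `x` alone) determines, for
every `k`, whether `G_{x,k}` is a tree must use messages from a set of size at
least `2^(n−3)`. -/
theorem isTree_one_way_lower_bound
    (n : ℕ) (hn : 4 ≤ n) (M : Type*) [Fintype M]
    (msg : (Fin (n - 2) → Bool) → M) (dec : M → Fin (n - 3) → Bool)
    (h : ∀ (x : Fin (n - 2) → Bool) (k : Fin (n - 3)),
      dec (msg x) k = true ↔ (Gxk n x k).IsTree) :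
    2 ^ (n - 3) ≤ Fintype.card M := by
  classical
  have hk2 : ∀ kk : Fin (n - 3), kk.val < n - 2 := fun kk => by have := kk.isLt; omega
  have hk2' : ∀ kk : Fin (n - 3), kk.val + 1 < n - 2 := fun kk => by have := kk.isLt; omega
  have key : ∀ (y : Fin (n - 3) → Bool) (kk : Fin (n - 3)),
      (dec (msg (encY n y)) kk = true) ↔ y kk = true := by
    intro y kk
    rw [h (encY n y) kk, gxk_isTree_iff n (encY n y) kk hn (hk2 kk) (hk2' kk)]
    exact encY_succ n y kk (hk2 kk) (hk2' kk)
  have hinj : Function.Injective (fun y : Fin (n - 3) → Bool => msg (encY n y)) := by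
    intro y y' hyy
    simp only at hyy
    funext kk
    have h1 := key y kk
    have h2 := key y' kk
    rw [hyy] at h1
    have h3 := h1.symm.trans h2
    cases hY : y kk <;> cases hY' : y' kk <;> simp_all
  calc (2 : ℕ) ^ (n - 3) = Fintype.card (Fin (n - 3) → Bool) := by simp
    _ ≤ Fintype.card M := Fintype.card_le_of_injective _ hinj
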